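/- arXiv:2012.09362 — 3 statements merged into one kernel-verified Lean document; each statement's English description precedes it below -/
import Mathlib

section
/- Accretivity estimate for the coupled stationary system: suppose (u, v, ξ) and (ū, v̄, ξ̄) satisfy a(u) - ξ = f, b(v) + ξ = b(g), ξ ∈ C(γ_r(u), γ_l(u); v), and a(ū) - ξ̄ = f̄, b(v̄) + ξ̄ = b(ḡ), ξ̄ ∈ C(γ_r(ū), γ_l(ū); v̄). Then (a(u)-a(ū))⁺ + (b(v)-b(v̄))⁺ ≤ (f-f̄)⁺ + (b(g)-b(ḡ))⁺. -/
/-- The constraint graph C(p,q;·) of the interval [p,q]: ξ ∈ C(p,q;r). -/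
def cMem (p q r ξ : ℝ) : Prop :=
  (r = p ∧ ξ ≤ 0) ∨ (p < r ∧ r < q ∧ ξ = 0) ∨ (r = q ∧ 0 ≤ ξ)

lemma cMem_bounds {p q r ξ : ℝ} (h : cMem p q r ξ) (hpq : p ≤ q) : p ≤ r ∧ r ≤ q := by
  rcases h with ⟨h1, _⟩ | ⟨h1, h2, _⟩ | ⟨h1, _⟩ <;> constructor <;> linarith

lemma cMem_pos {p q r ξ : ℝ} (h : cMem p q r ξ) (hξ : 0 < ξ) : r = q := by
  rcases h with ⟨_, h2⟩ | ⟨_, _, h2⟩ | ⟨h1, _⟩ <;> first | exact h1 | linarith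

lemma cMem_neg {p q r ξ : ℝ} (h : cMem p q r ξ) (hξ : ξ < 0) : r = p := by
  rcases h with ⟨h1, _⟩ | ⟨_, _, h2⟩ | ⟨_, h2⟩ <;> first | exact h1 | linarith

lemma max_add_est (A B δ : ℝ) (h1 : 0 < δ → 0 < A → 0 ≤ B)
    (h2 : δ < 0 → 0 < B → 0 ≤ A) :
    max A 0 + max B 0 ≤ max (A - δ) 0 + max (B + δ) 0 := by
  rcases lt_trichotomy δ 0 with hδ | hδ | hδ
  · rcases le_or_gt B 0 with hB | hB
    · have e0 : max B 0 = 0 := max_eq_right hB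
      have h3 : max A 0 ≤ max (A - δ) 0 := max_le_max (by linarith) le_rfl
      have h4 := le_max_right (B + δ) (0 : ℝ)
      linarith
    · have hA := h2 hδ hB
      have e1 : max A 0 = A := max_eq_left hA
      have e2 : max B 0 = B := max_eq_left hB.le
      have e3 : max (A - δ) 0 = A - δ := max_eq_left (by linarith)
      have h4 := le_max_left (B + δ) (0 : ℝ)
      linarith
  · subst hδ; simp
  · rcases le_or_gt A 0 with hA | hA
    · have e0 : max A 0 = 0 := max_eq_right hA
      have h3 : max B 0 ≤ max (B + δ) 0 := max_le_max (by linarith) le_rfl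
      have h4 := le_max_right (A - δ) (0 : ℝ)
      linarith
    · have hB := h1 hδ hA
      have e1 : max A 0 = A := max_eq_left hA.le
      have e2 : max B 0 = B := max_eq_left hB
      have e3 : max (B + δ) 0 = B + δ := max_eq_left (by linarith)
      have h4 := le_max_left (A - δ) (0 : ℝ)
      linarith

/-- Accretivity (order-preservation) estimate for the coupled stationary system. -/
theorem coupled_system_order_preserving
    (a b γl γr : ℝ → ℝ)
    (hac : Continuous a) (ham : StrictMono a)
    (hbc : Continuous b) (hbm : Monotone b) (L : NNReal) (hbL : LipschitzWith L b)
    (hγlc : Continuous γl) (hγrc : Continuous γr)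
    (hγlm : Monotone γl) (hγrm : Monotone γr) (hrl : ∀ x, γr x ≤ γl x)
    (u v ξ f g ub vb ξb fb gb : ℝ)
    (e1 : a u - ξ = f) (e2 : b v + ξ = b g) (hc : cMem (γr u) (γl u) v ξ)
    (e1b : a ub - ξb = fb) (e2b : b vb + ξb = b gb) (hcb : cMem (γr ub) (γl ub) vb ξb) :
    max (a u - a ub) 0 + max (b v - b vb) 0 ≤ max (f - fb) 0 + max (b g - b gb) 0 := by
  obtain ⟨hv1, hv2⟩ := cMem_bounds hc (hrl u)
  obtain ⟨hvb1, hvb2⟩ := cMem_bounds hcb (hrl ub)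
  have hf : f - fb = (a u - a ub) - (ξ - ξb) := by linarith
  have hg : b g - b gb = (b v - b vb) + (ξ - ξb) := by linarith
  rw [hf, hg]
  apply max_add_est
  · intro hδ hA
    have hu : ub < u := ham.lt_iff_lt.mp (by linarith)
    have hvv : vb ≤ v := by
      rcases lt_or_ge 0 ξ with hξ | hξ
      · have hveq : v = γl u := cMem_pos hc hξ
        have := hγlm hu.le
        linarith
      · have hξb : ξb < 0 := by linarith
        have hvbeq : vb = γr ub := cMem_neg hcb hξb
        have := hγrm hu.le
        linarith
    have := hbm hvv
    linarith
  · intro hδ hB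
    have hvv : vb < v := by
      by_contra h
      push_neg at h
      have := hbm h
      linarith
    have hu : ub < u := by
      rcases lt_or_ge ξ 0 with hξ | hξ
      · have hveq : v = γr u := cMem_neg hc hξ
        by_contra h
        push_neg at h
        have := hγrm h
        linarith
      · have hξb : 0 < ξb := by linarith
        have hvbeq : vb = γl ub := cMem_pos hcb hξb
        by_contra h
        push_neg at h
        have := hγlm h
        linarith
    have := ham.monotone hu.le
    linarith
end

section
/- Unique solvability of the implicit time step: for any V̄ = (V̄_k)_{k=1}^K, U^{n-1}, W^{n-1}, τ > 0 and F ∈ ℝ, there exists a unique U solving a(U) + Σ_k μ_k b_k(R_k(V̄_k; U)) = a(U^{n-1}) + W^{n-1} + τF, where R_k(V̄_k; U) = min(max(γ_{r,k}(U), V̄_k), γ_{l,k}(U)). -/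
/-- Unique solvability of the implicit time step for the K-generalized play model:
a(U) + Σ_k μ_k b_k(R_k(V̄_k; U)) = a(U^{n-1}) + W^{n-1} + τF has a unique solution U,
where a = id + a₀ with a₀ continuous nondecreasing. -/
theorem implicit_time_step_unique_solvability
    (K : ℕ) (a₀ : ℝ → ℝ) (ha₀c : Continuous a₀) (ha₀m : Monotone a₀)
    (b γl γr : Fin K → ℝ → ℝ) (μ : Fin K → ℝ)
    (hbc : ∀ k, Continuous (b k)) (hbm : ∀ k, Monotone (b k))
    (hμ : ∀ k, 0 < μ k)
    (hγlc : ∀ k, Continuous (γl k)) (hγrc : ∀ k, Continuous (γr k))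
    (hγlm : ∀ k, Monotone (γl k)) (hγrm : ∀ k, Monotone (γr k))
    (hrl : ∀ k x, γr k x ≤ γl k x)
    (Vbar : Fin K → ℝ) (Uprev Wprev τ F : ℝ) (hτ : 0 < τ) :
    ∃! U : ℝ,
      (U + a₀ U) + ∑ k, μ k * b k (min (max (γr k U) (Vbar k)) (γl k U))
        = (Uprev + a₀ Uprev) + Wprev + τ * F := by
  set t : ℝ := (Uprev + a₀ Uprev) + Wprev + τ * F with ht
  set h : ℝ → ℝ := fun U =>
    a₀ U + ∑ k, μ k * b k (min (max (γr k U) (Vbar k)) (γl k U)) with hh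
  have hmono : Monotone h := by
    intro x y hxy
    apply add_le_add (ha₀m hxy)
    refine Finset.sum_le_sum fun k _ => ?_
    refine mul_le_mul_of_nonneg_left (hbm k ?_) (hμ k).le
    exact min_le_min (max_le_max (hγrm k hxy) le_rfl) (hγlm k hxy)
  have hcont : Continuous h := by
    apply ha₀c.add
    apply continuous_finset_sum
    intro k _
    exact continuous_const.mul ((hbc k).comp
      (((hγrc k).max continuous_const).min (hγlc k)))
  set g : ℝ → ℝ := fun U => U + h U with hg
  have hgsm : StrictMono g := fun x y hxy =>
    add_lt_add_of_lt_of_le hxy (hmono hxy.le)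
  have hgc : Continuous g := continuous_id.add hcont
  have key : ∀ U, (U + a₀ U) + ∑ k, μ k * b k (min (max (γr k U) (Vbar k)) (γl k U)) = g U := by
    intro U; simp [hg, hh]; ring
  have hU₁ : g (min 0 (t - h 0)) ≤ t := by
    calc g (min 0 (t - h 0)) ≤ min 0 (t - h 0) + h 0 :=
          add_le_add le_rfl (hmono (min_le_left _ _))
      _ ≤ (t - h 0) + h 0 := add_le_add (min_le_right _ _) le_rfl
      _ = t := by ring
  have hU₂ : t ≤ g (max 0 (t - h 0)) := by
    calc t = (t - h 0) + h 0 := by ring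
      _ ≤ max 0 (t - h 0) + h 0 := add_le_add (le_max_right _ _) le_rfl
      _ ≤ g (max 0 (t - h 0)) := add_le_add le_rfl (hmono (le_max_left _ _))
  have hle : min 0 (t - h 0) ≤ max 0 (t - h 0) :=
    le_trans (min_le_left _ _) (le_max_left _ _)
  obtain ⟨U, _, hUt⟩ := intermediate_value_Icc hle (hgc.continuousOn) ⟨hU₁, hU₂⟩
  refine ⟨U, (key U).trans hUt, fun y hy => hgsm.injective ?_⟩
  have hy' : g y = t := (key y).symm.trans hy
  rw [hy', hUt]
end

section
/- Discrete balance identity: for the implicit step a(U^n) - a(U^{n-1}) + Σ_k μ_k(b_k(V_k^n) - b_k(V_k^{n-1})) = τF^n with V_k^n = R_k(V_k^{n-1}; U^n) and V_k^{n-1} ∈ [γ_{r,k}(U^{n-1}), γ_{l,k}(U^{n-1})], all the increments a(U^n)-a(U^{n-1}) and b_k(V_k^n)-b_k(V_k^{n-1}) have the same sign as F^n, and hence |a(U^n)-a(U^{n-1})| + Σ_k μ_k |b_k(V_k^n)-b_k(V_k^{n-1})| = τ|F^n|. -/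
/-- Discrete balance identity: all increments have the same sign as F^n, hence
|a(U^n)-a(U^{n-1})| + Σ_k μ_k |b_k(V_k^n)-b_k(V_k^{n-1})| = τ|F^n|. -/
theorem discrete_balance_identity
    (K : ℕ) (a₀ : ℝ → ℝ) (ha₀c : Continuous a₀) (ha₀m : Monotone a₀)
    (b γl γr : Fin K → ℝ → ℝ) (μ : Fin K → ℝ)
    (hbc : ∀ k, Continuous (b k)) (hbm : ∀ k, Monotone (b k))
    (L : Fin K → NNReal) (hbL : ∀ k, LipschitzWith (L k) (b k))
    (hμ : ∀ k, 0 < μ k)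
    (hγlc : ∀ k, Continuous (γl k)) (hγrc : ∀ k, Continuous (γr k))
    (hγlm : ∀ k, Monotone (γl k)) (hγrm : ∀ k, Monotone (γr k))
    (hrl : ∀ k x, γr k x ≤ γl k x)
    (Uprev Un τ F : ℝ) (hτ : 0 < τ)
    (Vprev Vn : Fin K → ℝ)
    (hVprev : ∀ k, Vprev k ∈ Set.Icc (γr k Uprev) (γl k Uprev))
    (hVn : ∀ k, Vn k = min (max (γr k Un) (Vprev k)) (γl k Un))
    (hbal : (Un + a₀ Un) - (Uprev + a₀ Uprev)
        + ∑ k, μ k * (b k (Vn k) - b k (Vprev k)) = τ * F) :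
    (0 ≤ F → 0 ≤ (Un + a₀ Un) - (Uprev + a₀ Uprev) ∧
      ∀ k, 0 ≤ b k (Vn k) - b k (Vprev k)) ∧
    (F ≤ 0 → (Un + a₀ Un) - (Uprev + a₀ Uprev) ≤ 0 ∧
      ∀ k, b k (Vn k) - b k (Vprev k) ≤ 0) ∧
    |(Un + a₀ Un) - (Uprev + a₀ Uprev)|
      + ∑ k, μ k * |b k (Vn k) - b k (Vprev k)| = τ * |F| := by
  set da := (Un + a₀ Un) - (Uprev + a₀ Uprev) with hda
  set db := fun k => b k (Vn k) - b k (Vprev k) with hdb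
  -- key sign dichotomy
  have key : (0 ≤ da ∧ ∀ k, 0 ≤ db k) ∨ (da ≤ 0 ∧ ∀ k, db k ≤ 0) := by
    rcases le_total Uprev Un with h | h
    · left
      refine ⟨by simp only [hda]; nlinarith [ha₀m h], fun k => ?_⟩
      have hV : Vprev k ≤ Vn k := by
        rw [hVn k]
        have h1 : Vprev k ≤ γl k Un := le_trans (hVprev k).2 (hγlm k h)
        exact le_min (le_max_right _ _) h1
      simpa [hdb] using sub_nonneg.mpr (hbm k hV)
    · right
      refine ⟨by simp only [hda]; nlinarith [ha₀m h], fun k => ?_⟩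
      have hV : Vn k ≤ Vprev k := by
        rw [hVn k]
        have h1 : γr k Un ≤ Vprev k := le_trans (hγrm k h) (hVprev k).1
        exact le_trans (min_le_left _ _) (max_le h1 le_rfl)
      simpa [hdb] using sub_nonpos.mpr (hbm k hV)
  rcases key with ⟨hda0, hdb0⟩ | ⟨hda0, hdb0⟩
  · have hsum : 0 ≤ ∑ k, μ k * db k :=
      Finset.sum_nonneg fun k _ => mul_nonneg (hμ k).le (hdb0 k)
    have hF : 0 ≤ F := by
      have : 0 ≤ τ * F := by linarith
      exact nonneg_of_mul_nonneg_right this hτ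
    refine ⟨fun _ => ⟨hda0, hdb0⟩, fun hF0 => ?_, ?_⟩
    · have hFz : F = 0 := le_antisymm hF0 hF
      have hzero : da + ∑ k, μ k * db k = 0 := by rw [hbal, hFz, mul_zero]
      constructor
      · linarith
      · intro k
        have h1 : μ k * db k ≤ ∑ j, μ j * db j :=
          Finset.single_le_sum (fun j _ => mul_nonneg (hμ j).le (hdb0 j))
            (Finset.mem_univ k)
        have h2 : μ k * db k ≤ 0 := by linarith
        show db k ≤ 0
        nlinarith [hμ k]
    · rw [abs_of_nonneg hda0, abs_of_nonneg hF]
      rw [show (∑ k, μ k * |db k|) = ∑ k, μ k * db k from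
        Finset.sum_congr rfl fun k _ => by rw [abs_of_nonneg (hdb0 k)]]
      exact hbal
  · have hsum : ∑ k, μ k * db k ≤ 0 :=
      Finset.sum_nonpos fun k _ => mul_nonpos_of_nonneg_of_nonpos (hμ k).le (hdb0 k)
    have hF : F ≤ 0 := by
      have : τ * F ≤ 0 := by linarith
      nlinarith
    refine ⟨fun hF0 => ?_, fun _ => ⟨hda0, hdb0⟩, ?_⟩
    · have hFz : F = 0 := le_antisymm hF hF0
      have hzero : da + ∑ k, μ k * db k = 0 := by rw [hbal, hFz, mul_zero]
      constructor
      · linarith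
      · intro k
        have h1 : ∑ j, μ j * db j ≤ μ k * db k := by
          have h := Finset.single_le_sum (f := fun j => -(μ j * db j)) (fun j _ =>
            neg_nonneg.mpr (mul_nonpos_of_nonneg_of_nonpos (hμ j).le (hdb0 j)))
            (Finset.mem_univ k)
          rw [Finset.sum_neg_distrib] at h
          have h' : -(μ k * db k) ≤ -∑ x, μ x * db x := h
          linarith
        have h2 : 0 ≤ μ k * db k := by linarith
        show 0 ≤ db k
        nlinarith [hμ k]
    · rw [abs_of_nonpos hda0, abs_of_nonpos hF]
      rw [show (∑ k, μ k * |db k|) = ∑ k, μ k * (-db k) from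
        Finset.sum_congr rfl fun k _ => by rw [abs_of_nonpos (hdb0 k)]]
      have : ∑ k, μ k * (-db k) = -∑ k, μ k * db k := by
        simp [mul_neg, Finset.sum_neg_distrib]
      rw [this]; linarith
end
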